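/- Let Γ be a connected finite simple graph. Then the restriction map r : Hom(A(Γ),ℝ) → Hom(BB(Γ),ℝ), sending a character of A(Γ) to its restriction to the subgroup BB(Γ), is a surjective ℝ-linear map, and its kernel consists precisely of those characters χ̂ : A(Γ) → ℝ that are constant on the vertex generators, i.e., for which there exists c ∈ ℝ with χ̂(v) = c for every vertex v of Γ. -/

import Mathlib

def raagRels {V : Type} (G : SimpleGraph V) : Set (FreeGroup V) :=
  {r | ∃ v w : V, G.Adj v w ∧
    r = FreeGroup.of v * FreeGroup.of w * (FreeGroup.of v)⁻¹ * (FreeGroup.of w)⁻¹}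

/-- The right-angled Artin group of a simple graph. -/
abbrev RAAG {V : Type} (G : SimpleGraph V) : Type := PresentedGroup (raagRels G)

/-- The canonical generator of `RAAG G` corresponding to a vertex. -/
def raagGen {V : Type} (G : SimpleGraph V) (v : V) : RAAG G :=
  PresentedGroup.of (rels := raagRels G) v

/-- The homomorphism `A(Γ) → ℤ` sending every vertex generator to `1`. -/
def bbgChar {V : Type} (G : SimpleGraph V) : RAAG G →* Multiplicative ℤ :=
  PresentedGroup.toGroup (f := fun _ : V => Multiplicative.ofAdd (1 : ℤ)) (by
    rintro r ⟨v, w, -, rfl⟩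
    simp only [map_mul, map_inv, FreeGroup.lift_apply_of]
    group)

/-- The Bestvina–Brady group of a simple graph, as a subgroup of the RAAG. -/
def BBG {V : Type} (G : SimpleGraph V) : Subgroup (RAAG G) := (bbgChar G).ker

/-- Restriction of a character of the RAAG to the Bestvina–Brady subgroup. -/
def restrictChar {V : Type} (G : SimpleGraph V) (χ : RAAG G →* Multiplicative ℝ) :
    ↥(BBG G) →* Multiplicative ℝ :=
  χ.comp (BBG G).subtype

/-- Scalar multiplication of an ℝ-valued character by a real number. -/
noncomputable def smulChar {H : Type} [Group H] (c : ℝ) (χ : H →* Multiplicative ℝ) :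
    H →* Multiplicative ℝ :=
  (AddMonoidHom.toMultiplicative (AddMonoidHom.mulLeft c)).comp χ

/-! When `Γ` is connected, `BB(Γ)` is generated by the edge elements `v * w⁻¹` (`v ~ w`).
Their closure `N` is normal: conjugating `v * w⁻¹` by a generator `u` gives
`(u * w⁻¹) * (v * u⁻¹)` because `v` and `w` commute, and `u * w⁻¹ ∈ N` along a path from `u`
to `w`. Hence `A(Γ) = N * ⟨v₀⟩`, and `χ_Γ` vanishes on `v₀ ^ k` only for `k = 0`, so
`BB(Γ) = N`. A character `φ` of `BB(Γ)` then extends by `v ↦ φ (v * v₀⁻¹)`, as both agree on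
the edge elements. A character equal to `c` on every generator is `c • χ_Γ`, so it vanishes on
`BB(Γ)`; conversely one vanishing on `BB(Γ)` takes the same value on `v` and `v₀`. -/

theorem SimpleGraph.Reachable.mul_inv_mem {V α : Type*} [Group α] {G : SimpleGraph V}
    {H : Subgroup α} {f : V → α} (hf : ∀ ⦃v w⦄, G.Adj v w → f v * (f w)⁻¹ ∈ H) {v w : V}
    (h : G.Reachable v w) : f v * (f w)⁻¹ ∈ H := by
  obtain ⟨p⟩ := h
  induction p with
  | nil => simp
  | cons hadj _ ih => simpa [mul_assoc] using H.mul_mem (hf hadj) ih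

theorem Subgroup.conj_mem_closure_of_forall_conj_mem {G : Type*} [Group G] {s : Set G} {g : G}
    (hs : ∀ x ∈ s, g * x * g⁻¹ ∈ closure s) {x : G} (hx : x ∈ closure s) :
    g * x * g⁻¹ ∈ closure s := by
  have : (closure s).map (MulAut.conj g).toMonoidHom ≤ closure s := by
    rw [MonoidHom.map_closure, closure_le]
    rintro _ ⟨y, hy, rfl⟩
    exact hs y hy
  exact this ⟨x, hx, rfl⟩

theorem Subgroup.mem_normalizer_closure_of_forall_conj_mem {G : Type*} [Group G] {s : Set G}
    {g : G} (h₁ : ∀ x ∈ s, g * x * g⁻¹ ∈ closure s) (h₂ : ∀ x ∈ s, g⁻¹ * x * g ∈ closure s) :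
    g ∈ normalizer (closure s : Set G) := by
  refine mem_normalizer_iff.mpr fun x => ⟨conj_mem_closure_of_forall_conj_mem h₁, fun hx => ?_⟩
  simpa [mul_assoc] using
    conj_mem_closure_of_forall_conj_mem (g := g⁻¹) (by simpa using h₂) hx

theorem Subgroup.closure_subtype_preimage_eq_top {G : Type*} [Group G] {H : Subgroup G}
    {s : Set G} (h : H = closure s) : closure (H.subtype ⁻¹' s) = ⊤ := by
  subst h
  exact closure_preimage_eq_top s

section RAAG

variable {V : Type} {G : SimpleGraph V}

theorem raagGen_commute {v w : V} (h : G.Adj v w) : Commute (raagGen G v) (raagGen G w) := by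
  rw [← commutatorElement_eq_one_iff_commute]
  simpa [raagGen, PresentedGroup.of, commutatorElement_def] using
    PresentedGroup.one_of_mem (rels := raagRels G) ⟨v, w, h, rfl⟩

def raagLift (G : SimpleGraph V) {A : Type*} [CommGroup A] (f : V → A) : RAAG G →* A :=
  PresentedGroup.toGroup (f := f) (by
    rintro r ⟨v, w, -, rfl⟩
    simp [mul_comm (f v)])

theorem raagLift_raagGen {A : Type*} [CommGroup A] (f : V → A) (v : V) :
    raagLift G f (raagGen G v) = f v :=
  PresentedGroup.toGroup.of _

theorem bbgChar_raagGen (v : V) : bbgChar G (raagGen G v) = Multiplicative.ofAdd 1 :=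
  PresentedGroup.toGroup.of _

theorem raagGen_mul_inv_mem_BBG (v w : V) : raagGen G v * (raagGen G w)⁻¹ ∈ BBG G := by
  simp [BBG, bbgChar_raagGen]

theorem BBG_le_ker_of_forall_eq {M : Type*} [Group M] {χ : RAAG G →* M} {m : M}
    (h : ∀ v, χ (raagGen G v) = m) : BBG G ≤ χ.ker := by
  have hχ : χ = (zpowersHom M m).comp (bbgChar G) :=
    PresentedGroup.ext fun v => by
      simpa [← raagGen.eq_def, bbgChar_raagGen] using h v
  intro x hx
  rw [MonoidHom.mem_ker, hχ, MonoidHom.comp_apply, (MonoidHom.mem_ker).mp hx, map_one]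

variable (G) in
def edgeGens : Set (RAAG G) :=
  {x | ∃ v w, G.Adj v w ∧ x = raagGen G v * (raagGen G w)⁻¹}

variable (G) in
def edgeSubgroup : Subgroup (RAAG G) :=
  Subgroup.closure (edgeGens G)

theorem edgeSubgroup_le_BBG : edgeSubgroup G ≤ BBG G := by
  rw [edgeSubgroup, Subgroup.closure_le]
  rintro _ ⟨v, w, -, rfl⟩
  exact raagGen_mul_inv_mem_BBG v w

theorem raagGen_mul_inv_mem_edgeSubgroup {v w : V} (h : G.Reachable v w) :
    raagGen G v * (raagGen G w)⁻¹ ∈ edgeSubgroup G :=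
  h.mul_inv_mem fun v w hvw => Subgroup.subset_closure (k := edgeGens G) ⟨v, w, hvw, rfl⟩

theorem inv_raagGen_mul_mem_edgeSubgroup {v w : V} (h : G.Reachable v w) :
    (raagGen G v)⁻¹ * raagGen G w ∈ edgeSubgroup G := by
  simpa using h.mul_inv_mem (f := fun v => (raagGen G v)⁻¹) fun v w hvw => by
    simpa [(raagGen_commute hvw).inv_left.eq] using
      raagGen_mul_inv_mem_edgeSubgroup (SimpleGraph.Adj.reachable hvw.symm)

theorem edgeSubgroup_normal (hG : G.Preconnected) : (edgeSubgroup G).Normal := by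
  rw [← Subgroup.normalizer_eq_top_iff, eq_top_iff, ← PresentedGroup.closure_range_of,
    Subgroup.closure_le]
  rintro _ ⟨u, rfl⟩
  change raagGen G u ∈ _
  refine Subgroup.mem_normalizer_closure_of_forall_conj_mem ?_ ?_ <;> rintro _ ⟨v, w, hvw, rfl⟩
  · rw [(raagGen_commute hvw).inv_right.eq,
      show raagGen G u * ((raagGen G w)⁻¹ * raagGen G v) * (raagGen G u)⁻¹ =
        (raagGen G u * (raagGen G w)⁻¹) * (raagGen G v * (raagGen G u)⁻¹) by group]
    exact mul_mem (raagGen_mul_inv_mem_edgeSubgroup (hG u w))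
      (raagGen_mul_inv_mem_edgeSubgroup (hG v u))
  · rw [show (raagGen G u)⁻¹ * (raagGen G v * (raagGen G w)⁻¹) * raagGen G u =
        ((raagGen G u)⁻¹ * raagGen G v) * ((raagGen G w)⁻¹ * raagGen G u) by group]
    exact mul_mem (inv_raagGen_mul_mem_edgeSubgroup (hG u v))
      (inv_raagGen_mul_mem_edgeSubgroup (hG w u))

theorem BBG_eq_edgeSubgroup (hG : G.Connected) : BBG G = edgeSubgroup G := by
  refine le_antisymm (fun x hx => ?_) edgeSubgroup_le_BBG
  obtain ⟨v₀⟩ := hG.nonempty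
  have := edgeSubgroup_normal hG.preconnected
  have hsup : edgeSubgroup G ⊔ Subgroup.zpowers (raagGen G v₀) = ⊤ := by
    rw [eq_top_iff, ← PresentedGroup.closure_range_of, Subgroup.closure_le]
    rintro _ ⟨v, rfl⟩
    change raagGen G v ∈ _
    simpa using Subgroup.mul_mem_sup (raagGen_mul_inv_mem_edgeSubgroup (hG v v₀))
      (Subgroup.mem_zpowers (raagGen G v₀))
  obtain ⟨n, hn, _, ⟨k, rfl⟩, rfl⟩ :=
    Subgroup.mem_sup_of_normal_left.mp (hsup ▸ Subgroup.mem_top x)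
  have hk : k = 0 := by
    simpa [BBG, (MonoidHom.mem_ker).mp (edgeSubgroup_le_BBG hn), bbgChar_raagGen] using hx
  simpa [hk] using hn

theorem restrictChar_surjective (hG : G.Connected) : Function.Surjective (restrictChar G) := by
  intro φ
  obtain ⟨v₀⟩ := hG.nonempty
  let ψ : V → BBG G := fun v => ⟨raagGen G v * (raagGen G v₀)⁻¹, raagGen_mul_inv_mem_BBG v v₀⟩
  have hψ₀ : ψ v₀ = 1 := Subtype.ext (mul_inv_cancel _)
  have hψ (v : V) : restrictChar G (raagLift G (φ ∘ ψ)) (ψ v) = φ (ψ v) := by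
    change raagLift G (φ ∘ ψ) (raagGen G v * (raagGen G v₀)⁻¹) = _
    rw [map_mul, map_inv, raagLift_raagGen, raagLift_raagGen, Function.comp_apply,
      Function.comp_apply, hψ₀, map_one, inv_one, mul_one]
  refine ⟨raagLift G (φ ∘ ψ), MonoidHom.eq_of_eqOn_dense
    (Subgroup.closure_subtype_preimage_eq_top (BBG_eq_edgeSubgroup hG)) ?_⟩
  rintro ⟨_, hx⟩ ⟨v, w, -, rfl⟩
  have : (⟨raagGen G v * (raagGen G w)⁻¹, hx⟩ : BBG G) = ψ v * (ψ w)⁻¹ :=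
    Subtype.ext (by simp [ψ])
  rw [this, map_mul, map_inv, map_mul, map_inv, hψ, hψ]

theorem restrictChar_eq_one_iff [Nonempty V] {χ : RAAG G →* Multiplicative ℝ} :
    restrictChar G χ = 1 ↔ ∃ c : ℝ, ∀ v : V, χ (raagGen G v) = Multiplicative.ofAdd c := by
  refine ⟨fun h => ?_, fun ⟨c, hc⟩ => ?_⟩
  · obtain ⟨v₀⟩ := ‹Nonempty V›
    refine ⟨Multiplicative.toAdd (χ (raagGen G v₀)), fun v => ?_⟩
    simpa [restrictChar, mul_inv_eq_one] using
      DFunLike.congr_fun h ⟨_, raagGen_mul_inv_mem_BBG v v₀⟩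
  · ext ⟨x, hx⟩
    exact BBG_le_ker_of_forall_eq hc hx

end RAAG

theorem stmt_14_general {V : Type} (G : SimpleGraph V) (hG : G.Connected) :
    Function.Surjective (restrictChar G) ∧
    (∀ χ ψ : RAAG G →* Multiplicative ℝ,
      restrictChar G (χ * ψ) = restrictChar G χ * restrictChar G ψ) ∧
    (∀ (c : ℝ) (χ : RAAG G →* Multiplicative ℝ),
      restrictChar G (smulChar c χ) = smulChar c (restrictChar G χ)) ∧
    (∀ χ : RAAG G →* Multiplicative ℝ,
      restrictChar G χ = 1 ↔ ∃ c : ℝ, ∀ v : V, χ (raagGen G v) = Multiplicative.ofAdd c) := by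
  have := hG.nonempty
  exact ⟨restrictChar_surjective hG, fun _ _ => rfl, fun _ _ => rfl,
    fun _ => restrictChar_eq_one_iff⟩

/-- For a connected graph, the restriction map `Hom(A(Γ),ℝ) → Hom(BB(Γ),ℝ)` is a surjective
ℝ-linear map whose kernel consists exactly of the characters that are constant on the vertex
generators. -/
theorem stmt_14 {V : Type} [Fintype V] (G : SimpleGraph V) (hG : G.Connected) :
    Function.Surjective (restrictChar G) ∧
    (∀ χ ψ : RAAG G →* Multiplicative ℝ,
      restrictChar G (χ * ψ) = restrictChar G χ * restrictChar G ψ) ∧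
    (∀ (c : ℝ) (χ : RAAG G →* Multiplicative ℝ),
      restrictChar G (smulChar c χ) = smulChar c (restrictChar G χ)) ∧
    (∀ χ : RAAG G →* Multiplicative ℝ,
      restrictChar G χ = 1 ↔ ∃ c : ℝ, ∀ v : V, χ (raagGen G v) = Multiplicative.ofAdd c) :=
  stmt_14_general G hG
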